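/- arXiv:2011.13639 — 2 statements merged into one kernel-verified Lean document; each statement's English description precedes it below -/
import Mathlib

section
/- Let δ ∈ ℝ∪{∞} and set r = e^{−δ}. For any two pseudo-convergent sequences E = {s_n} and F = {t_n} in K, both of breadth δ, the limit lim_{n→∞} max{d(s_n,t_n) − r, 0} exists in [0,∞). Moreover, if E' = {s'_n} is another pseudo-convergent sequence of breadth δ with V_{E'} = V_E, then lim_{n→∞} max{d(s'_n,t_n) − r, 0} = lim_{n→∞} max{d(s_n,t_n) − r, 0}; hence d_δ(V_E,V_F) = lim_{n→∞} max{d(s_n,t_n) − r, 0} is a well-defined function on 𝒱(•,δ) × 𝒱(•,δ). -/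
open Filter Topology TopologicalSpace Set Polynomial

noncomputable section

namespace PaperPCZar

variable {K : Type*} [Field K]

/-- `expNeg γ = e^{-γ}` for `γ ∈ ℝ ∪ {∞}`, with `e^{-∞} = 0`. -/
def expNeg (γ : WithTop ℝ) : ℝ := WithTop.recTopCoe 0 (fun r => Real.exp (-r)) γ

/-- `v` is a rank-one (i.e. nontrivial, real-valued) valuation. -/
def IsRankOne (v : AddValuation K (WithTop ℝ)) : Prop := ∃ x : K, v x ≠ 0 ∧ v x ≠ ⊤

/-- The value group `Γ_v` of `v`, as a subset of `ℝ`. -/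
def valueGroup (v : AddValuation K (WithTop ℝ)) : Set ℝ := {r : ℝ | ∃ x : K, v x = (r : WithTop ℝ)}

/-- `ℚΓ_v = {q·γ : q ∈ ℚ, γ ∈ Γ_v}`, the divisible hull of the value group inside `ℝ`. -/
def QGamma (v : AddValuation K (WithTop ℝ)) : Set ℝ :=
  {r : ℝ | ∃ (q : ℚ) (γ : ℝ), γ ∈ valueGroup v ∧ r = q * γ}

/-- Order convergence of a sequence in `ℝ ∪ {∞}` to `γ`. -/
def OrdLim (f : ℕ → WithTop ℝ) (γ : WithTop ℝ) : Prop :=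
  (∀ a : WithTop ℝ, a < γ → ∀ᶠ n in atTop, a < f n) ∧
  (∀ b : WithTop ℝ, γ < b → ∀ᶠ n in atTop, f n < b)

/-- `s` is a pseudo-convergent sequence with respect to `v`. -/
def IsPC (v : AddValuation K (WithTop ℝ)) (s : ℕ → K) : Prop :=
  ∀ n, v (s (n + 1) - s n) < v (s (n + 2) - s (n + 1))

/-- `s` is a pseudo-divergent sequence with respect to `v`. -/
def IsPD (v : AddValuation K (WithTop ℝ)) (s : ℕ → K) : Prop :=
  ∀ n, v (s (n + 1) - s (n + 2)) < v (s n - s (n + 1))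

/-- `s` is a pseudo-stationary sequence with respect to `v`. -/
def IsPS (v : AddValuation K (WithTop ℝ)) (s : ℕ → K) : Prop :=
  ∀ n m n' m' : ℕ, n ≠ m → n' ≠ m' → v (s n - s m) = v (s n' - s m')

/-- `δ ∈ ℝ ∪ {∞}` is the breadth of the sequence `s`, i.e. `δ = lim_n v(s_{n+1} - s_n)`. -/
def IsBreadth (v : AddValuation K (WithTop ℝ)) (s : ℕ → K) (δ : WithTop ℝ) : Prop :=
  OrdLim (fun n => v (s (n + 1) - s n)) δ

/-- `α ∈ K` is a pseudo-limit of the pseudo-convergent sequence `s`. -/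
def IsPCLimit (v : AddValuation K (WithTop ℝ)) (s : ℕ → K) (α : K) : Prop :=
  ∀ n, v (α - s n) < v (α - s (n + 1))

/-- `α ∈ K` is a pseudo-limit of the pseudo-divergent sequence `s`. -/
def IsPDLimit (v : AddValuation K (WithTop ℝ)) (s : ℕ → K) (α : K) : Prop :=
  ∀ n, v (α - s (n + 1)) < v (α - s n)

/-- `β ∈ K̄` is a pseudo-limit of `s ⊆ K` with respect to an extension `u` of `v`
to the algebraic closure of `K`. -/
def IsPCLimitAC (u : AddValuation (AlgebraicClosure K) (WithTop ℝ)) (s : ℕ → K)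
    (β : AlgebraicClosure K) : Prop :=
  ∀ n, u (β - algebraMap K (AlgebraicClosure K) (s n)) <
    u (β - algebraMap K (AlgebraicClosure K) (s (n + 1)))

/-- `s` is of transcendental type: for every polynomial `f`, `v(f(s_n))` eventually
stabilizes. -/
def IsTranscendentalType (v : AddValuation K (WithTop ℝ)) (s : ℕ → K) : Prop :=
  ∀ f : Polynomial K, ∃ N, ∀ n ≥ N, v (f.eval (s n)) = v (f.eval (s N))

/-- The ultrametric distance `d(x,y) = e^{-v(x-y)}` on `K`. -/
def dK (v : AddValuation K (WithTop ℝ)) (x y : K) : ℝ := expNeg (v (x - y))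

/-- The set `V_E = {φ ∈ K(X) : φ(s_n) ∈ V for all but finitely many n}`. -/
def VESet (v : AddValuation K (WithTop ℝ)) (s : ℕ → K) : Set (RatFunc K) :=
  {φ : RatFunc K | ∀ᶠ n in atTop, 0 ≤ v (RatFunc.eval (RingHom.id K) (s n) φ)}

/-- `Zar(K(X)|V)`: the valuation subrings of `K(X)` containing (the image of) `V`. -/
def ZarSet (v : AddValuation K (WithTop ℝ)) : Set (ValuationSubring (RatFunc K)) :=
  {W | ∀ x : K, 0 ≤ v x → algebraMap K (RatFunc K) x ∈ W}

/-- `𝒱`: valuation subrings of `K(X)` of the form `V_E`, `E` pseudo-convergent. -/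
def VV (v : AddValuation K (WithTop ℝ)) : Set (ValuationSubring (RatFunc K)) :=
  {W | ∃ s : ℕ → K, IsPC v s ∧ (W : Set (RatFunc K)) = VESet v s}

/-- `𝒱(•,δ)`: those `V_E` with `E` pseudo-convergent of breadth `δ`. -/
def VVδ (v : AddValuation K (WithTop ℝ)) (δ : WithTop ℝ) : Set (ValuationSubring (RatFunc K)) :=
  {W | ∃ s : ℕ → K, IsPC v s ∧ IsBreadth v s δ ∧ (W : Set (RatFunc K)) = VESet v s}

/-- `𝒱_K(•,δ)`: those `V_E` with `E` pseudo-convergent of breadth `δ` having a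
pseudo-limit in `K`. -/
def VVKδ (v : AddValuation K (WithTop ℝ)) (δ : WithTop ℝ) : Set (ValuationSubring (RatFunc K)) :=
  {W | ∃ s : ℕ → K, IsPC v s ∧ IsBreadth v s δ ∧ (∃ α : K, IsPCLimit v s α) ∧
    (W : Set (RatFunc K)) = VESet v s}

/-- `𝒱(β,•)`: those `V_E` with `E` pseudo-convergent having `β ∈ K̄` as a pseudo-limit
with respect to `u`. -/
def VVβ (v : AddValuation K (WithTop ℝ)) (u : AddValuation (AlgebraicClosure K) (WithTop ℝ))
    (β : AlgebraicClosure K) : Set (ValuationSubring (RatFunc K)) :=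
  {W | ∃ s : ℕ → K, IsPC v s ∧ IsPCLimitAC u s β ∧ (W : Set (RatFunc K)) = VESet v s}

/-- `𝒱(β,•)` for a pseudo-limit `β ∈ K`. -/
def VVβK (v : AddValuation K (WithTop ℝ)) (β : K) : Set (ValuationSubring (RatFunc K)) :=
  {W | ∃ s : ℕ → K, IsPC v s ∧ IsPCLimit v s β ∧ (W : Set (RatFunc K)) = VESet v s}

/-- `𝒱_div`: those `V_E` with `E` pseudo-divergent. -/
def VVdiv (v : AddValuation K (WithTop ℝ)) : Set (ValuationSubring (RatFunc K)) :=
  {W | ∃ s : ℕ → K, IsPD v s ∧ (W : Set (RatFunc K)) = VESet v s}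

/-- `𝒱_div(•,δ)`: those `V_E` with `E` pseudo-divergent of breadth `δ`. -/
def VVdivδ (v : AddValuation K (WithTop ℝ)) (δ : WithTop ℝ) : Set (ValuationSubring (RatFunc K)) :=
  {W | ∃ s : ℕ → K, IsPD v s ∧ IsBreadth v s δ ∧ (W : Set (RatFunc K)) = VESet v s}

/-- `𝒱_div(β,•)`: those `V_E` with `E` pseudo-divergent having `β ∈ K` as a pseudo-limit. -/
def VVdivβ (v : AddValuation K (WithTop ℝ)) (β : K) : Set (ValuationSubring (RatFunc K)) :=
  {W | ∃ s : ℕ → K, IsPD v s ∧ IsPDLimit v s β ∧ (W : Set (RatFunc K)) = VESet v s}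

/-- `𝒱_stat(•,δ)`: those `V_E` with `E` pseudo-stationary of breadth `δ`. -/
def VVstatδ (v : AddValuation K (WithTop ℝ)) (δ : WithTop ℝ) :
    Set (ValuationSubring (RatFunc K)) :=
  {W | ∃ s : ℕ → K, (∀ n m : ℕ, n ≠ m → v (s n - s m) = δ) ∧
    (W : Set (RatFunc K)) = VESet v s}

/-- `𝒱_stat(β,•)`: those `V_E` with `E` pseudo-stationary having `β` as a pseudo-limit. -/
def VVstatβ (v : AddValuation K (WithTop ℝ)) (β : K) : Set (ValuationSubring (RatFunc K)) :=
  {W | ∃ (s : ℕ → K) (δ : WithTop ℝ), (∀ n m : ℕ, n ≠ m → v (s n - s m) = δ) ∧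
    (∀ n, δ ≤ v (β - s n)) ∧ (W : Set (RatFunc K)) = VESet v s}

/-- The Zariski topology on the valuation subrings of a field `L`, generated by the
sets `B(φ) = {W : φ ∈ W}`. -/
def zarTop (L : Type*) [Field L] : TopologicalSpace (ValuationSubring L) :=
  generateFrom {U | ∃ φ : L, U = {W : ValuationSubring L | φ ∈ W}}

/-- The constructible topology on the valuation subrings of a field `L`: the coarsest
topology in which all finite intersections `B(φ₁) ∩ ⋯ ∩ B(φ_k)` are open and closed. -/
def consTop (L : Type*) [Field L] : TopologicalSpace (ValuationSubring L) :=
  generateFrom {U | ∃ T : Finset L, U = {W : ValuationSubring L | ∀ φ ∈ T, φ ∈ W} ∨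
    U = {W : ValuationSubring L | ∀ φ ∈ T, φ ∈ W}ᶜ}

/-- The subspace Zariski topology on a set of valuation subrings. -/
def zarSub {L : Type*} [Field L] (S : Set (ValuationSubring L)) : TopologicalSpace ↥S :=
  (zarTop L).induced Subtype.val

/-- The subspace constructible topology on a set of valuation subrings. -/
def consSub {L : Type*} [Field L] (S : Set (ValuationSubring L)) : TopologicalSpace ↥S :=
  (consTop L).induced Subtype.val

/-- `d` is a metric on `X` inducing the topology `t`. -/
def MetrizedBy {X : Type*} (t : TopologicalSpace X) (d : X → X → ℝ) : Prop :=
  (∀ x y, d x y = d y x) ∧ (∀ x y, d x y = 0 ↔ x = y) ∧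
  (∀ x y z, d x z ≤ d x y + d y z) ∧
  t = generateFrom {U : Set X | ∃ (x : X) (ε : ℝ), 0 < ε ∧ U = {y | d x y < ε}}

/-- The topology `t` is metrizable. -/
def IsMetrizable {X : Type*} (t : TopologicalSpace X) : Prop := ∃ d, MetrizedBy t d

/-- The topology `t` is induced by an ultrametric. -/
def IsUltrametrizable {X : Type*} (t : TopologicalSpace X) : Prop :=
  ∃ d, MetrizedBy t d ∧ ∀ x y z, d x z ≤ max (d x y) (d y z)

/-- `dd` computes the distance `d_δ` on `𝒱(•,δ)`:
`d_δ(V_E, V_F) = lim_n max (d(s_n,t_n) - e^{-δ}) 0`. -/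
def IsDistδ (v : AddValuation K (WithTop ℝ)) (δ : WithTop ℝ)
    (dd : ValuationSubring (RatFunc K) → ValuationSubring (RatFunc K) → ℝ) : Prop :=
  ∀ (W W' : ValuationSubring (RatFunc K)) (s t : ℕ → K),
    IsPC v s → IsBreadth v s δ → (W : Set (RatFunc K)) = VESet v s →
    IsPC v t → IsBreadth v t δ → (W' : Set (RatFunc K)) = VESet v t →
    Tendsto (fun n => max (dK v (s n) (t n) - expNeg δ) 0) atTop (𝓝 (dd W W'))

/-- The `Λ`-upper limit topology on the interval `(-∞, b] ⊆ ℝ ∪ {∞}`, generated by the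
half-open intervals `(α, λ]` with `λ ∈ Λ ∪ {∞}`. -/
def upperTopWT (b : WithTop ℝ) (Λ : Set ℝ) : TopologicalSpace {γ : WithTop ℝ // γ ≤ b} :=
  generateFrom {U | ∃ α lam : WithTop ℝ, α ≤ b ∧
    (lam = ⊤ ∨ ∃ r ∈ Λ, lam = (r : WithTop ℝ)) ∧
    U = {γ : {γ : WithTop ℝ // γ ≤ b} | α < (γ : WithTop ℝ) ∧ (γ : WithTop ℝ) ≤ lam}}

/-- The `Λ`-upper limit topology on `(-∞, +∞] = ℝ ∪ {∞}`. -/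
def upperTopAll (Λ : Set ℝ) : TopologicalSpace (WithTop ℝ) :=
  generateFrom {U | ∃ α lam : WithTop ℝ,
    (lam = ⊤ ∨ ∃ r ∈ Λ, lam = (r : WithTop ℝ)) ∧
    U = {γ : WithTop ℝ | α < γ ∧ γ ≤ lam}}

/-- The `Λ`-upper limit topology on an interval `(a, b]` of `ℝ ∪ {±∞}`. -/
def upperTopE (a b : EReal) (Λ : Set ℝ) : TopologicalSpace {x : EReal // a < x ∧ x ≤ b} :=
  generateFrom {U | ∃ α lam : EReal, (a < α ∧ α ≤ b) ∧
    (lam = ⊤ ∨ ∃ r ∈ Λ, lam = (r : EReal)) ∧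
    U = {x : {x : EReal // a < x ∧ x ≤ b} | α < (x : EReal) ∧ (x : EReal) ≤ lam}}

/-- `𝒲`: the valuation domains of the valuations `w_E : φ ↦ lim_n v(φ(s_n))`, as `E`
ranges over the pseudo-convergent sequences for which `w_E` is a valuation. -/
def WW (v : AddValuation K (WithTop ℝ)) : Set (ValuationSubring (RatFunc K)) :=
  {W | ∃ (s : ℕ → K) (w : AddValuation (RatFunc K) (WithTop ℝ)), IsPC v s ∧
    (∀ φ : RatFunc K, OrdLim (fun n => v (RatFunc.eval (RingHom.id K) (s n) φ)) (w φ)) ∧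
    (W : Set (RatFunc K)) = {φ : RatFunc K | 0 ≤ w φ}}

/-! Write `γ_n = v(s_{n+1} - s_n)` and `γ'_n = v(t_{n+1} - t_n)`; both increase strictly to `δ`.
If `v(s_N - t_N)` drops below `min γ_N γ'_N` for some `N`, it is constant from `N` on and so is
the truncated distance. Otherwise `d(s_n,t_n) ≤ max (e^{-γ_n}) (e^{-γ'_n}) → e^{-δ}`, and the
truncated distance tends to `0`.

If `V_{E'} = V_E`, testing on `(X - s_N) / (s_{N+1} - s_N) ∈ V_E` gives `v(s_n - s'_n) ≥ γ_N`
for large `n`, for every `N`, so `max (d(s_n,s'_n) - e^{-δ}) 0 → 0`. In an ultrametric space,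
replacing `x` by `x'` changes `max (d(x,y) - r) 0` by at most `max (d(x,x') - r) 0`. -/

lemma expNeg_strictAnti : StrictAnti expNeg := by
  intro a b h
  induction b using WithTop.recTopCoe with
  | top =>
    lift a to ℝ using h.ne_top
    exact Real.exp_pos _
  | coe q =>
    lift a to ℝ using (h.trans (WithTop.coe_lt_top q)).ne_top
    exact Real.exp_lt_exp.2 (neg_lt_neg (WithTop.coe_lt_coe.1 h))

lemma expNeg_nonneg (a : WithTop ℝ) : 0 ≤ expNeg a := by
  induction a using WithTop.recTopCoe with
  | top => exact le_rfl
  | coe r => exact (Real.exp_pos _).le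

lemma dK_comm (v : AddValuation K (WithTop ℝ)) (x y : K) : dK v x y = dK v y x := by
  rw [dK, dK, AddValuation.map_sub_swap]

lemma dK_le_max (v : AddValuation K (WithTop ℝ)) (x y z : K) :
    dK v x z ≤ max (dK v x y) (dK v y z) := by
  rw [dK, dK, dK, ← expNeg_strictAnti.antitone.map_min, ← sub_add_sub_cancel x y z]
  exact expNeg_strictAnti.antitone (v.map_add _ _)

/-- The hypotheses are the ultrametric inequalities for `a = d(x,y)`, `b = d(x',y)` and
`c = d(x,x')`: they force `a = b` unless both are at most `c`. -/
lemma abs_sub_truncate_le {a b c r : ℝ} (hab : a ≤ max c b) (hba : b ≤ max c a) :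
    |max (a - r) 0 - max (b - r) 0| ≤ max (c - r) 0 := by
  obtain rfl | ⟨hac, hbc⟩ : a = b ∨ a ≤ c ∧ b ≤ c := by grind
  · simp
  · have hmono : ∀ x ≤ c, max (x - r) 0 ≤ max (c - r) 0 := fun x hx => by gcongr
    rw [abs_le]
    constructor <;>
      linarith [le_max_right (a - r) 0, le_max_right (b - r) 0, hmono a hac, hmono b hbc]

lemma abs_sub_truncDist_le (v : AddValuation K (WithTop ℝ)) (r : ℝ) (x x' y : K) :
    |max (dK v x y - r) 0 - max (dK v x' y - r) 0| ≤ max (dK v x x' - r) 0 :=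
  abs_sub_truncate_le (dK_le_max v x x' y)
    (by simpa only [dK_comm v x' x] using dK_le_max v x' x y)

section PseudoConvergent

variable {v : AddValuation K (WithTop ℝ)} {δ : WithTop ℝ} {s t : ℕ → K}

lemma IsPC.strictMono (hs : IsPC v s) : StrictMono fun n => v (s (n + 1) - s n) :=
  strictMono_nat_of_lt_succ hs

lemma IsPC.le_sub (hs : IsPC v s) {n m : ℕ} (h : n ≤ m) :
    v (s (n + 1) - s n) ≤ v (s m - s n) := by
  induction m, h using Nat.le_induction with
  | base => simp
  | succ m hnm ih =>
    rw [← sub_add_sub_cancel (s (m + 1)) (s m) (s n)]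
    exact (le_min (hs.strictMono.monotone hnm) ih).trans (v.map_add _ _)

lemma IsPC.lt_breadth (hs : IsPC v s) (hsδ : IsBreadth v s δ) (n : ℕ) :
    v (s (n + 1) - s n) < δ := by
  by_contra! hle
  obtain ⟨m, hm, hnm⟩ :=
    ((hsδ.2 _ (hle.trans_lt (hs n))).and (eventually_ge_atTop (n + 1))).exists
  exact hm.not_ge (hs.strictMono.monotone hnm)

lemma IsPC.tendsto_expNeg (hs : IsPC v s) (hsδ : IsBreadth v s δ) :
    Tendsto (fun n => expNeg (v (s (n + 1) - s n))) atTop (𝓝 (expNeg δ)) := by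
  rw [tendsto_order]
  refine ⟨fun b hb => Eventually.of_forall fun n =>
    hb.trans (expNeg_strictAnti (hs.lt_breadth hsδ n)), fun b hb => ?_⟩
  have hlog : expNeg (-Real.log b : ℝ) = b := by
    rw [expNeg, WithTop.recTopCoe_coe, neg_neg, Real.exp_log ((expNeg_nonneg δ).trans_lt hb)]
  rw [← hlog] at hb ⊢
  filter_upwards [hsδ.1 _ (expNeg_strictAnti.lt_iff_gt.1 hb)] with n hn
  exact expNeg_strictAnti hn

lemma IsPC.eventually_le_sub_of_VESet_eq (hs : IsPC v s) {s' : ℕ → K}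
    (h : VESet v s' = VESet v s) (N : ℕ) :
    ∀ᶠ n in atTop, v (s (N + 1) - s N) ≤ v (s n - s' n) := by
  set c := s (N + 1) - s N
  have hc : v c ≠ ⊤ := (hs N).ne_top
  have hc0 : c ≠ 0 := fun h0 => hc (by rw [h0, v.map_zero])
  have hint : ∀ a : K, 0 ≤ v (c⁻¹ * a) ↔ v c ≤ v a := fun a => by
    have hsplit : v a = v c + v (c⁻¹ * a) := by rw [← v.map_mul, mul_inv_cancel_left₀ hc0]
    rw [hsplit, ← WithTop.add_le_add_iff_left hc, add_zero]
  let φ : RatFunc K := algebraMap K[X] (RatFunc K) (C c⁻¹ * (X - C (s N)))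
  have heval : ∀ a : K, RatFunc.eval (RingHom.id K) a φ = c⁻¹ * (a - s N) := fun a => by
    rw [RatFunc.eval_algebraMap]
    simp
  have hφ : φ ∈ VESet v s' := by
    rw [h]
    filter_upwards [eventually_ge_atTop N] with n hn
    rw [heval, hint]
    exact hs.le_sub hn
  filter_upwards [hφ, eventually_ge_atTop N] with n hn' hn
  rw [heval, hint] at hn'
  rw [← sub_sub_sub_cancel_right (s n) (s' n) (s N)]
  exact (le_min (hs.le_sub hn) hn').trans (v.map_sub _ _)

lemma IsPC.tendsto_truncDist_of_VESet_eq (hs : IsPC v s) (hsδ : IsBreadth v s δ)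
    {s' : ℕ → K} (h : VESet v s' = VESet v s) :
    Tendsto (fun n => max (dK v (s n) (s' n) - expNeg δ) 0) atTop (𝓝 0) := by
  rw [tendsto_order]
  refine ⟨fun b hb => Eventually.of_forall fun n => hb.trans_le (le_max_right _ _),
    fun b hb => ?_⟩
  obtain ⟨N, hN⟩ := ((hs.tendsto_expNeg hsδ).eventually
    (gt_mem_nhds (lt_add_of_pos_right (expNeg δ) hb))).exists
  filter_upwards [hs.eventually_le_sub_of_VESet_eq h N] with n hn
  have hd : dK v (s n) (s' n) ≤ expNeg (v (s (N + 1) - s N)) := expNeg_strictAnti.antitone hn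
  exact max_lt (by linarith) hb

lemma IsPC.sub_eq_of_lt_min (hs : IsPC v s) (ht : IsPC v t) {N : ℕ}
    (hN : v (s N - t N) < min (v (s (N + 1) - s N)) (v (t (N + 1) - t N)))
    {n : ℕ} (hn : N ≤ n) : v (s n - t n) = v (s N - t N) := by
  have hlt : v (s N - t N) < v ((s n - s N) - (t n - t N)) :=
    hN.trans_le ((min_le_min (hs.le_sub hn) (ht.le_sub hn)).trans (v.map_sub _ _))
  have hsplit : s n - t n = ((s n - s N) - (t n - t N)) + (s N - t N) := by ring
  rw [hsplit, v.map_add_eq_of_lt_right hlt]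

lemma IsPC.tendsto_truncDist_of_min_le (hs : IsPC v s) (hsδ : IsBreadth v s δ)
    (ht : IsPC v t) (htδ : IsBreadth v t δ)
    (h : ∀ n, min (v (s (n + 1) - s n)) (v (t (n + 1) - t n)) ≤ v (s n - t n)) :
    Tendsto (fun n => max (dK v (s n) (t n) - expNeg δ) 0) atTop (𝓝 0) := by
  have hbound : Tendsto (fun n => max (max (expNeg (v (s (n + 1) - s n)))
      (expNeg (v (t (n + 1) - t n))) - expNeg δ) 0) atTop (𝓝 0) := by
    simpa using (((hs.tendsto_expNeg hsδ).max (ht.tendsto_expNeg htδ)).sub_const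
      (expNeg δ)).max (tendsto_const_nhds (x := (0 : ℝ)))
  refine tendsto_of_tendsto_of_tendsto_of_le_of_le tendsto_const_nhds hbound
    (fun n => le_max_right _ _) (fun n => ?_)
  have hd : dK v (s n) (t n) ≤
      max (expNeg (v (s (n + 1) - s n))) (expNeg (v (t (n + 1) - t n))) := by
    rw [dK, ← expNeg_strictAnti.antitone.map_min]
    exact expNeg_strictAnti.antitone (h n)
  gcongr

lemma IsPC.exists_tendsto_truncDist (hs : IsPC v s) (hsδ : IsBreadth v s δ)
    (ht : IsPC v t) (htδ : IsBreadth v t δ) :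
    ∃ l : ℝ, 0 ≤ l ∧ Tendsto (fun n => max (dK v (s n) (t n) - expNeg δ) 0) atTop (𝓝 l) := by
  by_cases hdrop : ∃ N, v (s N - t N) < min (v (s (N + 1) - s N)) (v (t (N + 1) - t N))
  · obtain ⟨N, hN⟩ := hdrop
    refine ⟨max (dK v (s N) (t N) - expNeg δ) 0, le_max_right _ _,
      tendsto_const_nhds.congr' ?_⟩
    filter_upwards [eventually_ge_atTop N] with n hn
    rw [dK, dK, hs.sub_eq_of_lt_min ht hN hn]
  · simp only [not_exists, not_lt] at hdrop
    exact ⟨0, le_rfl, hs.tendsto_truncDist_of_min_le hsδ ht htδ hdrop⟩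

end PseudoConvergent

theorem statement0_general (v : AddValuation K (WithTop ℝ))
    (δ : WithTop ℝ) (s t : ℕ → K)
    (hs : IsPC v s) (hsδ : IsBreadth v s δ) (ht : IsPC v t) (htδ : IsBreadth v t δ) :
    (∃ l : ℝ, 0 ≤ l ∧
      Tendsto (fun n => max (dK v (s n) (t n) - expNeg δ) 0) atTop (𝓝 l)) ∧
    (∀ s' : ℕ → K, IsPC v s' → IsBreadth v s' δ → VESet v s' = VESet v s →
      ∀ l l' : ℝ,
        Tendsto (fun n => max (dK v (s n) (t n) - expNeg δ) 0) atTop (𝓝 l) →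
        Tendsto (fun n => max (dK v (s' n) (t n) - expNeg δ) 0) atTop (𝓝 l') →
        l' = l) := by
  refine ⟨hs.exists_tendsto_truncDist hsδ ht htδ, fun s' _ _ hVE l l' hl hl' => ?_⟩
  have hdiff : Tendsto (fun n => max (dK v (s n) (t n) - expNeg δ) 0 -
      max (dK v (s' n) (t n) - expNeg δ) 0) atTop (𝓝 0) :=
    squeeze_zero_norm (fun n => (abs_sub_truncDist_le v _ (s n) (s' n) (t n)))
      (hs.tendsto_truncDist_of_VESet_eq hsδ hVE)
  exact (sub_eq_zero.1 (tendsto_nhds_unique (hl.sub hl') hdiff)).symm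

/-- For pseudo-convergent sequences `E = {s_n}`, `F = {t_n}` of breadth
`δ`, the limit `lim_n max (d(s_n,t_n) - e^{-δ}) 0` exists in `[0,∞)`, and it only depends
on the ring `V_E` (not on the representing sequence); hence `d_δ` is well defined. -/
theorem statement0 (v : AddValuation K (WithTop ℝ)) (hv : IsRankOne v)
    (δ : WithTop ℝ) (s t : ℕ → K)
    (hs : IsPC v s) (hsδ : IsBreadth v s δ) (ht : IsPC v t) (htδ : IsBreadth v t δ) :
    (∃ l : ℝ, 0 ≤ l ∧
      Tendsto (fun n => max (dK v (s n) (t n) - expNeg δ) 0) atTop (𝓝 l)) ∧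
    (∀ s' : ℕ → K, IsPC v s' → IsBreadth v s' δ → VESet v s' = VESet v s →
      ∀ l l' : ℝ,
        Tendsto (fun n => max (dK v (s n) (t n) - expNeg δ) 0) atTop (𝓝 l) →
        Tendsto (fun n => max (dK v (s' n) (t n) - expNeg δ) 0) atTop (𝓝 l') →
        l' = l) :=
  statement0_general v δ s t hs hsδ ht htδ

end PaperPCZar
end
end

section
/- Let V be a rank-one non-discrete valuation domain. Suppose d is a metric on 𝒱 that induces the Zariski topology of 𝒱. Then, for every δ ∈ ℝ∪{∞}, the restriction of d to 𝒱(•,δ) is not equal to the distance d_δ. -/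
/-!
If `s` has a pseudo-limit `e ∈ K` with `v (s n - e) = γ n` real and strictly increasing, then for
each `f ∈ K[X]` one monomial of the Taylor expansion at `e` eventually dominates, so `v (f (s n))`
is eventually affine in `γ n`, hence of constant sign: `V_E` is a valuation ring, and eventually
`v (φ y)` depends only on `v (y - e)`.

Take `δ' < δ` real, `x'` with `v (x' M) = γ' M ↑`, `γ' M < δ'`, and `x` with `v (x n) ↑ δ`,
`v (x n) > δ'` (density of the value group). The rings `W_M = V_{x'_M + x}` lie in `𝒱(•,δ)`, and
by the above they converge to `U = V_{x'}` in the Zariski topology, because every term of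
`x'_M + x` has valuation `γ' M`. A metric inducing this topology thus makes
`d(W_M, W_{M+1}) → 0`, while `d_δ(W_M, W_{M+1}) = e^{-γ'_M} - e^{-δ} ≥ e^{-δ'} - e^{-δ} > 0`.
-/

open Filter Topology TopologicalSpace Set Polynomial

noncomputable section

namespace PaperPCZar

variable {K : Type*} [Field K]

lemma eventually_pos_or_forall_nonpos_of_monotone {u : ℕ → ℝ} (hu : Monotone u) :
    (∀ᶠ n in atTop, 0 < u n) ∨ ∀ n, u n ≤ 0 := by
  by_cases h : ∃ n₀, 0 < u n₀
  · obtain ⟨n₀, h₀⟩ := h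
    exact Or.inl (eventually_atTop.2 ⟨n₀, fun n hn => h₀.trans_le (hu hn)⟩)
  · simp only [not_exists, not_lt] at h
    exact Or.inr h

lemma eventually_lt_or_gt_of_slope_lt {γ : ℕ → ℝ} (hγ : StrictMono γ) (a b : ℝ) {s t : ℝ}
    (hst : s < t) :
    (∀ᶠ n in atTop, a + s * γ n < b + t * γ n) ∨ ∀ᶠ n in atTop, b + t * γ n < a + s * γ n := by
  have hu : StrictMono fun n => (b + t * γ n) - (a + s * γ n) := fun m n hmn => by
    nlinarith [hγ hmn]
  rcases eventually_pos_or_forall_nonpos_of_monotone hu.monotone with h | h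
  · exact Or.inl (h.mono fun n hn => sub_pos.1 hn)
  · exact Or.inr (.of_forall fun n => sub_neg.1 ((hu (lt_add_one n)).trans_le (h (n + 1))))

lemma eventually_nonneg_or_nonpos_affine {γ : ℕ → ℝ} (hγ : Monotone γ) (c σ : ℝ) :
    (∀ᶠ n in atTop, 0 ≤ c + σ * γ n) ∨ ∀ᶠ n in atTop, c + σ * γ n ≤ 0 := by
  rcases le_or_gt 0 σ with hσ | hσ
  · have hu : Monotone fun n => c + σ * γ n := fun m n hmn => by nlinarith [hγ hmn]
    rcases eventually_pos_or_forall_nonpos_of_monotone hu with h | h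
    · exact Or.inl (h.mono fun n hn => hn.le)
    · exact Or.inr (.of_forall h)
  · have hu : Monotone fun n => -(c + σ * γ n) := fun m n hmn => by nlinarith [hγ hmn]
    rcases eventually_pos_or_forall_nonpos_of_monotone hu with h | h
    · exact Or.inr (h.mono fun n hn => by linarith)
    · exact Or.inl (.of_forall fun n => by linarith [h n])

lemma exists_mem_eventually_forall_lt {ι X β : Type*} [Preorder β] {l : Filter X}
    {S : Finset ι} (hS : S.Nonempty) (a : ι → X → β)
    (h : ∀ i ∈ S, ∀ j ∈ S, i ≠ j →
      (∀ᶠ x in l, a i x < a j x) ∨ ∀ᶠ x in l, a j x < a i x) :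
    ∃ I ∈ S, ∀ᶠ x in l, ∀ j ∈ S, j ≠ I → a I x < a j x := by
  induction hS using Finset.Nonempty.cons_induction with
  | singleton i =>
    exact ⟨i, Finset.mem_singleton_self i,
      .of_forall fun x j hj hji => (hji (Finset.mem_singleton.1 hj)).elim⟩
  | cons k S hk hS ih =>
    obtain ⟨I, hI, hmin⟩ :=
      ih fun i hi j hj => h i (Finset.mem_cons_of_mem hi) j (Finset.mem_cons_of_mem hj)
    have hkI : k ≠ I := fun hkI => hk (hkI ▸ hI)
    rcases h k (Finset.mem_cons_self k S) I (Finset.mem_cons_of_mem hI) hkI with hlt | hlt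
    · refine ⟨k, Finset.mem_cons_self k S, ?_⟩
      filter_upwards [hmin, hlt] with x hx hkx j hj hjk
      obtain hjS := (Finset.mem_cons.1 hj).resolve_left hjk
      rcases eq_or_ne j I with rfl | hjI
      · exact hkx
      · exact hkx.trans (hx j hjS hjI)
    · refine ⟨I, Finset.mem_cons_of_mem hI, ?_⟩
      filter_upwards [hmin, hlt] with x hx hIx j hj hjI
      rcases Finset.mem_cons.1 hj with rfl | hjS
      · exact hIx
      · exact hx j hjS hjI

lemma eventually_eval₂_denom_ne_zero {s : ℕ → K} (hs : Function.Injective s) (φ : RatFunc K) :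
    ∀ᶠ n in atTop, φ.denom.eval₂ (RingHom.id K) (s n) ≠ 0 :=
  (Nat.cofinite_eq_atTop ▸ hs.tendsto_cofinite).eventually
    (finite_setOfPred_isRoot (RatFunc.denom_ne_zero φ)).eventually_cofinite_notMem

lemma eventually_ratFuncEval_inv {s : ℕ → K} (hs : Function.Injective s) {φ : RatFunc K}
    (hφ : φ ≠ 0) :
    ∀ᶠ n in atTop, RatFunc.eval (RingHom.id K) (s n) φ⁻¹ =
      (RatFunc.eval (RingHom.id K) (s n) φ)⁻¹ := by
  filter_upwards [eventually_eval₂_denom_ne_zero hs φ⁻¹, eventually_eval₂_denom_ne_zero hs φ]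
    with n h₁ h₂
  have h := RatFunc.eval_mul _ _ h₁ h₂
  rw [inv_mul_cancel₀ hφ, RatFunc.eval_one] at h
  exact eq_inv_of_mul_eq_one_left h.symm

section Valuation

variable (v : AddValuation K (WithTop ℝ))

lemma val_sum_eq_of_lt {ι : Type*} [DecidableEq ι] {S : Finset ι} {f : ι → K} {i : ι}
    (hi : i ∈ S) (hfi : v (f i) ≠ ⊤) (h : ∀ j ∈ S, j ≠ i → v (f i) < v (f j)) :
    v (∑ j ∈ S, f j) = v (f i) := by
  rw [← Finset.add_sum_erase S f hi]
  exact v.map_add_eq_of_lt_left (v.map_lt_sum hfi fun j hj =>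
    h j (Finset.mem_of_mem_erase hj) (Finset.ne_of_mem_erase hj))

/-- Distinct affine functions of `γ n` are eventually strictly ordered, so a single monomial of `f`
eventually dominates at every `y` with `v y = γ n`. -/
lemma exists_val_eval_eq_affine {f : K[X]} (hf : f ≠ 0) {γ : ℕ → ℝ} (hγ : StrictMono γ) :
    ∃ (A : ℝ) (m : ℕ), ∀ᶠ n in atTop, ∀ y : K, v y = γ n →
      v (f.eval y) = ((A + m * γ n : ℝ) : WithTop ℝ) := by
  classical
  choose! α hα using fun j (hj : j ∈ f.support) =>
    WithTop.ne_top_iff_exists.1 ((v.ne_top_iff).2 (mem_support_iff.1 hj))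
  have hterm : ∀ j ∈ f.support, ∀ (μ : ℝ) (y : K), v y = μ →
      v (f.coeff j * y ^ j) = ((α j + j * μ : ℝ) : WithTop ℝ) := by
    intro j hj μ y hy
    rw [v.map_mul, v.map_pow, hy, ← hα j hj, ← WithTop.coe_nsmul, ← WithTop.coe_add, nsmul_eq_mul]
  obtain ⟨I, hI, hmin⟩ := exists_mem_eventually_forall_lt (nonempty_support_iff.2 hf)
    (fun j n => α j + j * γ n) fun i _ j _ hij => by
      rcases (Nat.cast_injective.ne hij : (i : ℝ) ≠ j).lt_or_gt with h | h
      · exact eventually_lt_or_gt_of_slope_lt hγ _ _ h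
      · exact (eventually_lt_or_gt_of_slope_lt hγ _ _ h).symm
  refine ⟨α I, I, hmin.mono fun n hn y hy => ?_⟩
  rw [eval_eq_sum, sum_def, val_sum_eq_of_lt v hI, hterm I hI _ y hy]
  · rw [hterm I hI _ y hy]
    exact WithTop.coe_ne_top
  · intro j hj hjI
    rw [hterm I hI _ y hy, hterm j hj _ y hy]
    exact WithTop.coe_lt_coe.2 (hn j hj hjI)

lemma exists_val_ratFuncEval_eq_affine {φ : RatFunc K} (hφ : φ ≠ 0) (e : K) {γ : ℕ → ℝ}
    (hγ : StrictMono γ) :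
    ∃ c σ : ℝ, ∀ᶠ n in atTop, ∀ y : K, v (y - e) = γ n →
      v (RatFunc.eval (RingHom.id K) y φ) = ((c + σ * γ n : ℝ) : WithTop ℝ) := by
  obtain ⟨A, m, hnum⟩ := exists_val_eval_eq_affine v
    ((taylor_eq_zero e _).not.2 (RatFunc.num_ne_zero hφ)) hγ
  obtain ⟨B, k, hden⟩ := exists_val_eval_eq_affine v
    ((taylor_eq_zero e _).not.2 (RatFunc.denom_ne_zero φ)) hγ
  refine ⟨A - B, m - k, (hnum.and hden).mono fun n hn y hy => ?_⟩
  have hnum' := hn.1 _ hy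
  have hden' := hn.2 _ hy
  rw [taylor_eval, sub_add_cancel] at hnum' hden'
  change v (φ.num.eval y / φ.denom.eval y) = _
  rw [v.map_div, hnum', hden', ← WithTop.LinearOrderedAddCommGroup.coe_sub]
  congr 1
  ring

def veSubring {s : ℕ → K} (hs : Function.Injective s) : Subring (RatFunc K) where
  carrier := VESet v s
  zero_mem' := .of_forall fun n => by simp
  one_mem' := .of_forall fun n => by simp
  add_mem' {φ ψ} hφ hψ := by
    filter_upwards [hφ, hψ, eventually_eval₂_denom_ne_zero hs φ,
      eventually_eval₂_denom_ne_zero hs ψ] with n h₁ h₂ h₃ h₄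
    rw [RatFunc.eval_add _ _ h₃ h₄]
    exact v.map_le_add h₁ h₂
  mul_mem' {φ ψ} hφ hψ := by
    filter_upwards [hφ, hψ, eventually_eval₂_denom_ne_zero hs φ,
      eventually_eval₂_denom_ne_zero hs ψ] with n h₁ h₂ h₃ h₄
    rw [RatFunc.eval_mul _ _ h₃ h₄, v.map_mul]
    exact add_nonneg h₁ h₂
  neg_mem' {φ} hφ := by
    filter_upwards [hφ, eventually_eval₂_denom_ne_zero hs φ] with n h₁ h₂
    have hneg : -φ = RatFunc.C (-1) * φ := by rw [map_neg, map_one, neg_one_mul]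
    rw [hneg, RatFunc.eval_mul _ _ (by rw [RatFunc.denom_C]; simp) h₂, RatFunc.eval_C]
    simpa using h₁

variable {s : ℕ → K} {e : K} {γ : ℕ → ℝ}

lemma injective_of_val_sub_eq (hγ : StrictMono γ) (hs : ∀ n, v (s n - e) = γ n) :
    Function.Injective s :=
  fun n m h => hγ.injective (WithTop.coe_injective (by rw [← hs, ← hs, h]))

lemma val_sub_eq_of_lt (hγ : StrictMono γ) (hs : ∀ n, v (s n - e) = γ n) {n m : ℕ}
    (h : n < m) : v (s m - s n) = γ n := by
  rw [← sub_sub_sub_cancel_right (s m) (s n) e, v.map_sub_eq_of_lt_right, hs]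
  rw [hs, hs]
  exact WithTop.coe_lt_coe.2 (hγ h)

/-- `V_E` for a sequence `E = s` having `e` as a pseudo-limit, with `v (s n - e)` real. -/
def veValuationSubring (s : ℕ → K) (e : K) (hγ : StrictMono γ) (hs : ∀ n, v (s n - e) = γ n) :
    ValuationSubring (RatFunc K) where
  toSubring := veSubring v (injective_of_val_sub_eq v hγ hs)
  mem_or_inv_mem' φ := by
    rcases eq_or_ne φ 0 with rfl | hφ
    · exact Or.inl (veSubring v (injective_of_val_sub_eq v hγ hs)).zero_mem
    obtain ⟨c, σ, h⟩ := exists_val_ratFuncEval_eq_affine v hφ e hγ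
    rcases eventually_nonneg_or_nonpos_affine hγ.monotone c σ with hpos | hneg
    · left
      filter_upwards [h, hpos] with n h₁ h₂
      rw [h₁ _ (hs n)]
      exact_mod_cast h₂
    · right
      filter_upwards [h, hneg, eventually_ratFuncEval_inv (injective_of_val_sub_eq v hγ hs) hφ]
        with n h₁ h₂ h₃
      rw [h₃, v.map_inv, h₁ _ (hs n), ← WithTop.LinearOrderedAddCommGroup.coe_neg]
      exact_mod_cast neg_nonneg.2 h₂

lemma isPC_of_val_sub_eq (hγ : StrictMono γ) (hs : ∀ n, v (s n - e) = γ n) : IsPC v s :=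
  fun n => by
    rw [val_sub_eq_of_lt v hγ hs (lt_add_one n),
      val_sub_eq_of_lt v hγ hs (n := n + 1) (m := n + 2) (by omega)]
    exact WithTop.coe_lt_coe.2 (hγ (lt_add_one n))

lemma isBreadth_of_val_sub_eq (hγ : StrictMono γ) (hs : ∀ n, v (s n - e) = γ n)
    {δ : WithTop ℝ} (hδ : OrdLim (fun n => (γ n : WithTop ℝ)) δ) : IsBreadth v s δ := by
  have h : (fun n => v (s (n + 1) - s n)) = fun n => (γ n : WithTop ℝ) :=
    funext fun n => val_sub_eq_of_lt v hγ hs (lt_add_one n)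
  rwa [IsBreadth, h]

lemma veValuationSubring_mem_VV (hγ : StrictMono γ) (hs : ∀ n, v (s n - e) = γ n) :
    veValuationSubring v s e hγ hs ∈ VV v :=
  ⟨s, isPC_of_val_sub_eq v hγ hs, rfl⟩

lemma veValuationSubring_mem_VVδ (hγ : StrictMono γ) (hs : ∀ n, v (s n - e) = γ n)
    {δ : WithTop ℝ} (hδ : OrdLim (fun n => (γ n : WithTop ℝ)) δ) :
    veValuationSubring v s e hγ hs ∈ VVδ v δ :=
  ⟨s, isPC_of_val_sub_eq v hγ hs, isBreadth_of_val_sub_eq v hγ hs hδ, rfl⟩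

/-- Eventually `v (φ y)` depends only on `v y`, so the integrality of `φ` at `s M` spreads to
every `y` with `v y = v (s M)`. -/
lemma eventually_forall_val_eq_nonneg (hγ : StrictMono γ) (hs : ∀ n, v (s n) = γ n)
    {φ : RatFunc K} (hφ : φ ∈ VESet v s) :
    ∀ᶠ M in atTop, ∀ y : K, v y = γ M → 0 ≤ v (RatFunc.eval (RingHom.id K) y φ) := by
  rcases eq_or_ne φ 0 with rfl | hφ0
  · exact .of_forall fun M y _ => by simp
  obtain ⟨c, σ, h⟩ := exists_val_ratFuncEval_eq_affine v hφ0 0 hγ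
  filter_upwards [h, hφ] with M hM hφM y hy
  rw [hM y (by rwa [sub_zero])]
  rwa [hM (s M) (by rw [sub_zero, hs])] at hφM

end Valuation
lemma ordLim_iff_tendsto {f : ℕ → WithTop ℝ} {δ : WithTop ℝ} :
    OrdLim f δ ↔ Tendsto f atTop (𝓝 δ) :=
  tendsto_order.symm

lemma exists_strictMono_ordLim {S : Set ℝ} (hS : Dense S) {b : ℝ} {δ : WithTop ℝ}
    (hb : (b : WithTop ℝ) < δ) :
    ∃ γ : ℕ → ℝ, StrictMono γ ∧ (∀ n, γ n ∈ S ∧ b < γ n ∧ (γ n : WithTop ℝ) < δ) ∧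
      OrdLim (fun n => (γ n : WithTop ℝ)) δ := by
  induction δ using WithTop.recTopCoe with
  | top =>
    choose γ hγS hγ using fun n : ℕ => hS.exists_between (lt_add_one (b + n))
    have hmono : StrictMono γ := strictMono_nat_of_lt_succ fun n =>
      (hγ n).2.trans (by have := (hγ (n + 1)).1; push_cast at this; linarith)
    refine ⟨γ, hmono, fun n => ⟨hγS n, ?_, WithTop.coe_lt_top _⟩, ?_⟩
    · linarith [(hγ n).1, (Nat.cast_nonneg n : (0 : ℝ) ≤ n)]
    · rw [ordLim_iff_tendsto]
      exact WithTop.tendsto_coe_atTop.comp (tendsto_atTop_mono (fun n => (hγ n).1.le)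
        (tendsto_atTop_add_const_left _ b tendsto_natCast_atTop_atTop))
  | coe r =>
    obtain ⟨γ, hmono, hγ, hlim⟩ := hS.exists_seq_strictMono_tendsto_of_lt (WithTop.coe_lt_coe.1 hb)
    refine ⟨γ, hmono, fun n => ⟨(hγ n).2, (hγ n).1.1, WithTop.coe_lt_coe.2 (hγ n).1.2⟩, ?_⟩
    rw [ordLim_iff_tendsto]
    exact (WithTop.continuous_coe.tendsto r).comp hlim

lemma exists_seq_val_strictMono (v : AddValuation K (WithTop ℝ)) (hnd : Dense (valueGroup v))
    {b : ℝ} {δ : WithTop ℝ} (hb : (b : WithTop ℝ) < δ) :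
    ∃ (x : ℕ → K) (γ : ℕ → ℝ), StrictMono γ ∧
      (∀ n, v (x n) = γ n ∧ b < γ n ∧ (γ n : WithTop ℝ) < δ) ∧
      OrdLim (fun n => (γ n : WithTop ℝ)) δ := by
  obtain ⟨γ, hγ, hγS, hlim⟩ := exists_strictMono_ordLim hnd hb
  choose x hx using fun n => (hγS n).1
  exact ⟨x, γ, hγ, fun n => ⟨hx n, (hγS n).2⟩, hlim⟩

lemma tendsto_zarSub_iff {L : Type*} [Field L] {S : Set (ValuationSubring L)} {ι : Type*}
    {l : Filter ι} {f : ι → S} {W : S} :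
    Tendsto f l (@nhds S (zarSub S) W) ↔
      ∀ φ ∈ (W : ValuationSubring L), ∀ᶠ i in l, φ ∈ (f i : ValuationSubring L) := by
  rw [zarSub, @nhds_induced _ _ (zarTop L), tendsto_comap_iff, zarTop,
    tendsto_nhds_generateFrom_iff]
  simp only [mem_ofPred_eq, forall_exists_index, forall_eq_apply_imp_iff, preimage_ofPred_eq,
    Function.comp_apply]
  rfl

lemma MetrizedBy.eventually_lt {X : Type*} {t : TopologicalSpace X} {d : X → X → ℝ}
    (hd : MetrizedBy t d) {ι : Type*} {l : Filter ι} {f : ι → X} {x : X}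
    (hf : Tendsto f l (@nhds X t x)) {ε : ℝ} (hε : 0 < ε) : ∀ᶠ i in l, d x (f i) < ε := by
  have hopen : IsOpen[t] {y | d x y < ε} := by
    rw [hd.2.2.2]
    exact .basic _ ⟨x, ε, hε, rfl⟩
  exact hf (@IsOpen.mem_nhds X t _ _ hopen (by simpa [(hd.2.1 x x).2 rfl] using hε))

lemma MetrizedBy.eventually_dist_succ_lt {X : Type*} {t : TopologicalSpace X} {d : X → X → ℝ}
    (hd : MetrizedBy t d) {f : ℕ → X} {x : X} (hf : Tendsto f atTop (@nhds X t x)) {ε : ℝ}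
    (hε : 0 < ε) : ∀ᶠ n in atTop, d (f n) (f (n + 1)) < ε := by
  filter_upwards [hd.eventually_lt hf (half_pos hε),
    hd.eventually_lt ((tendsto_add_atTop_iff_nat 1).2 hf) (half_pos hε)] with n h₁ h₂
  calc d (f n) (f (n + 1)) ≤ d (f n) x + d x (f (n + 1)) := hd.2.2.1 _ _ _
    _ < ε := by rw [hd.1]; linarith

lemma expNeg_lt_exp_neg {r : ℝ} {δ : WithTop ℝ} (h : (r : WithTop ℝ) < δ) :
    expNeg δ < Real.exp (-r) := by
  induction δ using WithTop.recTopCoe with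
  | top => exact Real.exp_pos _
  | coe r' => exact Real.exp_lt_exp.2 (neg_lt_neg (WithTop.coe_lt_coe.1 h))

lemma IsDistδ.eq_veValuationSubring {v : AddValuation K (WithTop ℝ)} {δ : WithTop ℝ}
    {dd : ValuationSubring (RatFunc K) → ValuationSubring (RatFunc K) → ℝ}
    (hdd : IsDistδ v δ dd) {γ : ℕ → ℝ} (hγ : StrictMono γ)
    (hδ : OrdLim (fun n => (γ n : WithTop ℝ)) δ) {s t : ℕ → K} {e e' : K}
    (hs : ∀ n, v (s n - e) = γ n) (ht : ∀ n, v (t n - e') = γ n) {c : K}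
    (hst : ∀ n, s n - t n = c) :
    dd (veValuationSubring v s e hγ hs) (veValuationSubring v t e' hγ ht) =
      max (expNeg (v c) - expNeg δ) 0 :=
  tendsto_nhds_unique
    (hdd _ _ s t (isPC_of_val_sub_eq v hγ hs) (isBreadth_of_val_sub_eq v hγ hs hδ) rfl
      (isPC_of_val_sub_eq v hγ ht) (isBreadth_of_val_sub_eq v hγ ht hδ) rfl)
    (by simp only [dK, hst]; exact tendsto_const_nhds)

theorem statement6_general (v : AddValuation K (WithTop ℝ))
    (hnd : Dense (valueGroup v))
    (dd : WithTop ℝ → ValuationSubring (RatFunc K) → ValuationSubring (RatFunc K) → ℝ)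
    (hdd : ∀ δ : WithTop ℝ, IsDistδ v δ (dd δ))
    (d : ↥(VV v) → ↥(VV v) → ℝ) (hd : MetrizedBy (zarSub (VV v)) d) :
    ∀ δ : WithTop ℝ, ¬ (∀ W W' : ↥(VV v),
      (W : ValuationSubring (RatFunc K)) ∈ VVδ v δ →
      (W' : ValuationSubring (RatFunc K)) ∈ VVδ v δ →
      d W W' = dd δ (W : ValuationSubring (RatFunc K))
        (W' : ValuationSubring (RatFunc K))) := by
  intro δ hdδ
  obtain ⟨_, hlt⟩ := exists_lt δ
  obtain ⟨δ', rfl⟩ := WithTop.ne_top_iff_exists.1 hlt.ne_top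
  obtain ⟨x', γ', hγ', hx', -⟩ :=
    exists_seq_val_strictMono v hnd (WithTop.coe_lt_coe.2 (sub_one_lt δ'))
  obtain ⟨x, γ, hγ, hx, hlim⟩ := exists_seq_val_strictMono v hnd hlt
  have hU : ∀ n, v (x' n - 0) = γ' n := fun n => by rw [sub_zero, (hx' n).1]
  have hW : ∀ M n, v ((x' M + x n) - x' M) = γ n := fun M n => by
    rw [add_sub_cancel_left, (hx n).1]
  let U : VV v := ⟨_, veValuationSubring_mem_VV v hγ' hU⟩
  let W : ℕ → VV v := fun M => ⟨_, veValuationSubring_mem_VV v hγ (hW M)⟩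
  have hWU : Tendsto W atTop (@nhds _ (zarSub (VV v)) U) := by
    refine tendsto_zarSub_iff.2 fun φ hφ => ?_
    filter_upwards [eventually_forall_val_eq_nonneg v hγ' (fun n => (hx' n).1) hφ] with M hM
    refine .of_forall fun n => hM _ ?_
    rw [v.map_add_eq_of_lt_left, (hx' M).1]
    rw [(hx' M).1, (hx n).1]
    exact WithTop.coe_lt_coe.2 ((WithTop.coe_lt_coe.1 (hx' M).2.2).trans (hx n).2.1)
  have hgap : ∀ M, Real.exp (-δ') - expNeg δ ≤ d (W M) (W (M + 1)) := fun M => by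
    rw [hdδ _ _ (veValuationSubring_mem_VVδ v hγ (hW M) hlim)
      (veValuationSubring_mem_VVδ v hγ (hW (M + 1)) hlim),
      (hdd δ).eq_veValuationSubring hγ hlim (hW M) (hW (M + 1))
        fun n => add_sub_add_right_eq_sub _ _ _,
      v.map_sub_swap, val_sub_eq_of_lt v hγ' hU (lt_add_one M)]
    exact le_max_of_le_left (sub_le_sub_right
      (Real.exp_le_exp.2 (neg_le_neg (WithTop.coe_lt_coe.1 (hx' M).2.2).le)) _)
  obtain ⟨M, hM⟩ := (hd.eventually_dist_succ_lt hWU (sub_pos.2 (expNeg_lt_exp_neg hlt))).exists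
  exact (hgap M).not_gt hM

/-- If `V` is rank-one non-discrete and `d` is a metric on `𝒱` inducing
the Zariski topology, then for every `δ ∈ ℝ ∪ {∞}` the restriction of `d` to `𝒱(•,δ)`
is not equal to `d_δ`. -/
theorem statement6 (v : AddValuation K (WithTop ℝ)) (hv : IsRankOne v)
    (hnd : Dense (valueGroup v))
    (dd : WithTop ℝ → ValuationSubring (RatFunc K) → ValuationSubring (RatFunc K) → ℝ)
    (hdd : ∀ δ : WithTop ℝ, IsDistδ v δ (dd δ))
    (d : ↥(VV v) → ↥(VV v) → ℝ) (hd : MetrizedBy (zarSub (VV v)) d) :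
    ∀ δ : WithTop ℝ, ¬ (∀ W W' : ↥(VV v),
      (W : ValuationSubring (RatFunc K)) ∈ VVδ v δ →
      (W' : ValuationSubring (RatFunc K)) ∈ VVδ v δ →
      d W W' = dd δ (W : ValuationSubring (RatFunc K))
        (W' : ValuationSubring (RatFunc K))) :=
  statement6_general v hnd dd hdd d hd

end PaperPCZar
end
end
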